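/- arXiv:2305.07298 — 2 statements merged into one kernel-verified Lean document; each statement's English description precedes it below -/
import Mathlib

section
/- Suppose Ψ : ℝ → ℝ satisfies (x − y)(Ψ(x) − Ψ(y)) ≤ l_Ψ (x − y)² for all x, y, and φ : ℝ → ℝ is differentiable with 1 ≤ φ'(z) ≤ H for all z (so φ is strictly increasing). Define L_Ψ = l_Ψ/H if l_Ψ < 0 and L_Ψ = l_Ψ otherwise. Then for all x ≠ y, ((φ(x) − φ(y))/(x − y)) · (x − y)(Ψ(x) − Ψ(y)) ≤ L_Ψ (φ(x) − φ(y))². -/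
/-!
By the mean value theorem the difference quotient `r = (φ x - φ y)/(x - y)` is a value of `φ'`,
so `1 ≤ r ≤ H`. Multiplying the one-sided Lipschitz bound by `r > 0` gives
`r (x - y)(Ψ x - Ψ y) ≤ l_Ψ r (x - y)²`, and it remains to compare `l_Ψ r` with `L_Ψ r²`:
for `l_Ψ ≥ 0` this is `r ≤ r²`, for `l_Ψ < 0` it is `r² ≤ H r`.
-/

theorem exists_deriv_eq_div_sub_of_ne {f : ℝ → ℝ} (hf : Differentiable ℝ f) {x y : ℝ}
    (hxy : x ≠ y) : ∃ c, deriv f c = (f x - f y) / (x - y) := by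
  rcases hxy.lt_or_gt with h | h
  · obtain ⟨c, -, hc⟩ := exists_deriv_eq_slope f h hf.continuous.continuousOn
      hf.differentiableOn
    exact ⟨c, by rw [hc, ← neg_div_neg_eq, neg_sub, neg_sub]⟩
  · obtain ⟨c, -, hc⟩ := exists_deriv_eq_slope f h hf.continuous.continuousOn
      hf.differentiableOn
    exact ⟨c, hc⟩

theorem mul_le_ite_div_mul_sq {l r H : ℝ} (hr : 1 ≤ r) (hrH : r ≤ H) :
    l * r ≤ (if l < 0 then l / H else l) * r ^ 2 := by
  split_ifs with hl
  · have hH : 0 < H := by linarith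
    rw [div_mul_eq_mul_div, le_div_iff₀ hH]
    nlinarith [mul_nonneg (mul_nonneg (neg_nonneg.mpr hl.le) (by linarith : (0 : ℝ) ≤ r))
      (sub_nonneg.mpr hrH)]
  · nlinarith [mul_nonneg (mul_nonneg (not_lt.mp hl) (by linarith : (0 : ℝ) ≤ r))
      (sub_nonneg.mpr hr)]

/-- Monotonicity transfer: if `Ψ` is one-sided Lipschitz with constant `l_Ψ` and `φ` is
differentiable with `1 ≤ φ' ≤ H`, then for `L_Ψ = l_Ψ/H` (if `l_Ψ < 0`) or `l_Ψ` (otherwise),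
`((φ(x)−φ(y))/(x−y)) (x−y)(Ψ(x)−Ψ(y)) ≤ L_Ψ (φ(x)−φ(y))²` for all `x ≠ y`. -/
theorem stmt_13 (Ψ φ : ℝ → ℝ) (lΨ H : ℝ)
    (hΨ : ∀ x y : ℝ, (x - y) * (Ψ x - Ψ y) ≤ lΨ * (x - y) ^ 2)
    (hφ : Differentiable ℝ φ)
    (hφ' : ∀ z : ℝ, 1 ≤ deriv φ z ∧ deriv φ z ≤ H) :
    ∀ x y : ℝ, x ≠ y →
      (φ x - φ y) / (x - y) * ((x - y) * (Ψ x - Ψ y)) ≤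
        (if lΨ < 0 then lΨ / H else lΨ) * (φ x - φ y) ^ 2 := by
  intro x y hxy
  obtain ⟨c, hc⟩ := exists_deriv_eq_div_sub_of_ne hφ hxy
  set r := (φ x - φ y) / (x - y)
  obtain ⟨hr, hrH⟩ : 1 ≤ r ∧ r ≤ H := hc ▸ hφ' c
  have hφr : φ x - φ y = r * (x - y) := (div_mul_cancel₀ _ (sub_ne_zero.mpr hxy)).symm
  calc r * ((x - y) * (Ψ x - Ψ y))
      ≤ r * (lΨ * (x - y) ^ 2) := mul_le_mul_of_nonneg_left (hΨ x y) (by linarith)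
    _ = lΨ * r * (x - y) ^ 2 := by ring
    _ ≤ (if lΨ < 0 then lΨ / H else lΨ) * r ^ 2 * (x - y) ^ 2 :=
        mul_le_mul_of_nonneg_right (mul_le_ite_div_mul_sq hr hrH) (sq_nonneg _)
    _ = (if lΨ < 0 then lΨ / H else lΨ) * (φ x - φ y) ^ 2 := by rw [hφr]; ring
end

section
/- Let b, σ : ℝ → ℝ with σ continuous and nonvanishing, and suppose φ on [ξ_{k+1}, ∞) is defined by φ(y) = φ(ξ_{k+1}) + ∫_{ξ_{k+1}}^y (1 + (φ'(ξ_{k+1}) − 1) exp(−∫_{ξ_{k+1}}^x 2b(s)/σ²(s) ds)) dx with φ'(ξ_{k+1}) ≥ 1. If b(y) ≥ 0 for all y > ξ_{k+1}, then 1 ≤ φ'(y) ≤ φ'(ξ_{k+1}) for all y ≥ ξ_{k+1}, and at every continuity point x > ξ_{k+1} of b, φ satisfies φ'(x) b(x) + (1/2) φ''(x) σ²(x) = b(x). -/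
open intervalIntegral MeasureTheory

/-!
With `q = 2b/σ²` and `I(x) = ∫_ξ^x q`, the derivative of `φ` is `g = 1 + (d - 1) e^{-I}`.
Since `b ≥ 0` beyond `ξ`, `I ≥ 0` there, so `e^{-I} ∈ (0, 1]` and `1 ≤ g ≤ d`. Where `b` is
continuous, `I' = q`, so `g` solves the linear equation `g' = -(g - 1) q`; multiplied by `σ²/2`
this is `φ' b + φ'' σ² / 2 = b`.
-/

section SlopeProfile

open Real Set

noncomputable def slopeProfile (q : ℝ → ℝ) (ξ d : ℝ) (x : ℝ) : ℝ :=
  1 + (d - 1) * exp (-∫ s in ξ..x, q s)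

variable {q : ℝ → ℝ} {ξ d : ℝ}

theorem continuous_slopeProfile (hq : ∀ a b, IntervalIntegrable q volume a b) :
    Continuous (slopeProfile q ξ d) :=
  continuous_const.add <| continuous_const.mul (continuous_primitive hq ξ).neg.rexp

theorem slopeProfile_mem_Icc {y : ℝ} (hd : 1 ≤ d) (hy : 0 ≤ ∫ s in ξ..y, q s) :
    slopeProfile q ξ d y ∈ Icc 1 d := by
  have hexp_pos : 0 < exp (-∫ s in ξ..y, q s) := exp_pos _
  have hexp_le : exp (-∫ s in ξ..y, q s) ≤ 1 := exp_le_one_iff.mpr (neg_nonpos.mpr hy)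
  constructor <;> unfold slopeProfile <;> nlinarith

theorem hasDerivAt_integral_of_continuousAt (hq : ∀ a b, IntervalIntegrable q volume a b)
    (a : ℝ) {x : ℝ} (hx : ContinuousAt q x) :
    HasDerivAt (fun u => ∫ s in a..u, q s) (q x) x :=
  integral_hasDerivAt_right (hq a x)
    (AEStronglyMeasurable.stronglyMeasurableAtFilter_of_mem (hq (x - 1) (x + 1)).1.1
      (Ioc_mem_nhds (by linarith) (by linarith))) hx

theorem hasDerivAt_slopeProfile (hq : ∀ a b, IntervalIntegrable q volume a b) {x : ℝ}
    (hx : ContinuousAt q x) :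
    HasDerivAt (slopeProfile q ξ d) (-(slopeProfile q ξ d x - 1) * q x) x := by
  refine ((((hasDerivAt_integral_of_continuousAt hq ξ hx).neg.exp).const_mul (d - 1)).const_add
    1).congr_deriv ?_
  simp only [slopeProfile, Pi.neg_apply]
  ring

end SlopeProfile

/-- The extension of the control-drift function beyond `ξ` (case (P_b1): `b ≥ 0` to the right):
`φ(y) = φ(ξ) + ∫_ξ^y (1 + (d−1) exp(−∫_ξ^x 2b/σ²))` with `d = φ'(ξ) ≥ 1` satisfies
`1 ≤ φ' ≤ d` on `[ξ, ∞)` and `φ' b + (1/2) φ'' σ² = b` at continuity points of `b` beyond `ξ`. -/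
theorem stmt_15 (b σ φ : ℝ → ℝ) (ξ φξ d : ℝ)
    (hσc : Continuous σ) (hσ0 : ∀ x, σ x ≠ 0) (hd : 1 ≤ d)
    (hbpos : ∀ y, ξ < y → 0 ≤ b y)
    (hint : ∀ y, IntervalIntegrable (fun s => 2 * b s / (σ s) ^ 2) volume ξ y)
    (hφ : ∀ y, φ y = φξ + ∫ x in ξ..y,
      (1 + (d - 1) * Real.exp (-∫ s in ξ..x, 2 * b s / (σ s) ^ 2))) :
    (∀ y, ξ ≤ y → 1 ≤ deriv φ y ∧ deriv φ y ≤ d) ∧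
    (∀ x, ξ < x → ContinuousAt b x →
      deriv φ x * b x + 1/2 * deriv (deriv φ) x * (σ x) ^ 2 = b x) := by
  set q : ℝ → ℝ := fun s => 2 * b s / (σ s) ^ 2
  have hq : ∀ a c, IntervalIntegrable q volume a c := fun a c => (hint a).symm.trans (hint c)
  have hφ' : deriv φ = slopeProfile q ξ d := by
    funext y
    rw [show φ = fun u => φξ + ∫ x in ξ..u, slopeProfile q ξ d x from funext hφ,
      deriv_const_add, (continuous_slopeProfile hq).deriv_integral]
  refine ⟨fun y hy => ?_, fun x _ hbx => ?_⟩
  · rw [hφ']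
    refine slopeProfile_mem_Icc hd ?_
    rw [integral_of_le hy]
    exact setIntegral_nonneg measurableSet_Ioc fun s hs => by
      have := hbpos s hs.1
      positivity
  · have hqx : ContinuousAt q x :=
      (continuousAt_const.mul hbx).div (hσc.continuousAt.pow 2) (pow_ne_zero 2 (hσ0 x))
    rw [hφ', (hasDerivAt_slopeProfile hq hqx).deriv]
    simp only [q]
    field_simp [hσ0 x]
    ring
end
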